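/- Let L_t(\sigma) = (R + B^T Z_{t+1} B + \sigma^2 B^T Z_{t+1} B)^{-1} B^T Z_{t+1} A be the fully observable LQS feedback gain with control-dependent noise scaling \sigma (with C = \sigma B and Z^e dropped), where R is symmetric positive definite and Z_{t+1} symmetric positive semidefinite. If B^T Z_{t+1} A \ne 0 and B^T Z_{t+1} B \ne 0, then there exist \sigma_1 \ne \sigma_2 \ge 0 with L_t(\sigma_1) \ne L_t(\sigma_2); i.e., the feedback gain genuinely depends on the control-dependent noise magnitude. -/

import Mathlib

/-!
Compare `σ = 0` with `σ = 1`. If the two gains agree, their common value `X` solves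
`(R + P) X = G` and `(R + 2P) X = G` with `P = Bᵀ Z B`, `G = Bᵀ Z A`, so `P X = 0`.
For a positive semidefinite `M`, `Xᵀ M X = 0` forces `M X = 0`; applied to `Z` this gives
`Z B X = 0`, hence `Xᵀ R X = Xᵀ G = (Z B X)ᵀ A = 0`, and applied to `R` it gives
`G = R X = 0`.
-/

open Matrix
open scoped MatrixOrder ComplexOrder

namespace Matrix

variable {𝕜 : Type*} [RCLike 𝕜] {k m n : Type*} [Fintype m] [Fintype n]

theorem PosSemidef.mul_eq_zero_of_conjTranspose_mul_mul_eq_zero {A : Matrix n n 𝕜}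
    (hA : A.PosSemidef) {X : Matrix n k 𝕜} (h : Xᴴ * A * X = 0) : A * X = 0 := by
  classical
  obtain ⟨S, rfl⟩ := CStarAlgebra.nonneg_iff_eq_star_mul_self.mp hA.nonneg
  rw [star_eq_conjTranspose] at h ⊢
  have hSX : S * X = 0 := by
    rw [← conjTranspose_mul_self_eq_zero, conjTranspose_mul, ← h]
    simp only [Matrix.mul_assoc]
  rw [Matrix.mul_assoc, hSX, Matrix.mul_zero]

theorem mul_nonsing_inv_mul_eq_zero_of_inv_mul_eq_inv_add_mul {α : Type*} [CommRing α]
    [DecidableEq m] {M P : Matrix m m α} (hM : IsUnit M.det) (hMP : IsUnit (M + P).det)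
    {G : Matrix m k α}
    (h : M⁻¹ * G = (M + P)⁻¹ * G) : P * (M⁻¹ * G) = 0 := by
  have hG : (M + P) * (M⁻¹ * G) = M * (M⁻¹ * G) := by
    rw [mul_nonsing_inv_cancel_left _ _ hM, h, mul_nonsing_inv_cancel_left _ _ hMP]
  simpa only [Matrix.add_mul, add_eq_left] using hG

theorem conjTranspose_mul_mul_eq_zero_of_mul_eq_zero {R : Matrix m m 𝕜} {Z : Matrix n n 𝕜}
    (hR : R.PosSemidef) (hZ : Z.PosSemidef) {A : Matrix n k 𝕜} {B : Matrix n m 𝕜}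
    {X : Matrix m k 𝕜} (hPX : Bᴴ * Z * B * X = 0) (hX : (R + Bᴴ * Z * B) * X = Bᴴ * Z * A) :
    Bᴴ * Z * A = 0 := by
  have hZBX : Z * (B * X) = 0 := hZ.mul_eq_zero_of_conjTranspose_mul_mul_eq_zero <| by
    simp only [conjTranspose_mul, Matrix.mul_assoc] at hPX ⊢
    rw [hPX, Matrix.mul_zero]
  have hRX : R * X = Bᴴ * Z * A := by
    rwa [Matrix.add_mul, hPX, add_zero] at hX
  have hXRX : Xᴴ * R * X = 0 := calc
    Xᴴ * R * X = (Z * (B * X))ᴴ * A := by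
      rw [Matrix.mul_assoc, hRX, conjTranspose_mul, conjTranspose_mul, hZ.isHermitian.eq]
      simp only [Matrix.mul_assoc]
    _ = 0 := by rw [hZBX, conjTranspose_zero, Matrix.zero_mul]
  rw [← hRX, hR.mul_eq_zero_of_conjTranspose_mul_mul_eq_zero hXRX]

end Matrix

theorem feedback_gain_depends_on_control_noise_general
    (n m : ℕ)
    (R : Matrix (Fin m) (Fin m) ℝ) (Z : Matrix (Fin n) (Fin n) ℝ)
    (A : Matrix (Fin n) (Fin n) ℝ) (B : Matrix (Fin n) (Fin m) ℝ)
    (hR : R.PosDef) (hZ : Z.PosSemidef)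
    (hBZA : Bᵀ * Z * A ≠ 0) :
    ∃ σ₁ σ₂ : ℝ, 0 ≤ σ₁ ∧ 0 ≤ σ₂ ∧ σ₁ ≠ σ₂ ∧
      (R + Bᵀ * Z * B + σ₁ ^ 2 • (Bᵀ * Z * B))⁻¹ * (Bᵀ * Z * A) ≠
      (R + Bᵀ * Z * B + σ₂ ^ 2 • (Bᵀ * Z * B))⁻¹ * (Bᵀ * Z * A) := by
  refine ⟨0, 1, le_rfl, zero_le_one, zero_ne_one, fun h => hBZA ?_⟩
  rw [zero_pow two_ne_zero, zero_smul, add_zero, one_pow, one_smul] at h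
  rw [← conjTranspose_eq_transpose_of_trivial] at h ⊢
  have hP : (Bᴴ * Z * B).PosSemidef := hZ.conjTranspose_mul_mul_same B
  have hM : (R + Bᴴ * Z * B).PosDef := hR.add_posSemidef hP
  have hMP : (R + Bᴴ * Z * B + Bᴴ * Z * B).PosDef := hM.add_posSemidef hP
  have hdet (N : Matrix (Fin m) (Fin m) ℝ) (hN : N.PosDef) : IsUnit N.det :=
    (isUnit_iff_isUnit_det N).mp hN.isUnit
  refine conjTranspose_mul_mul_eq_zero_of_mul_eq_zero hR.posSemidef hZ
    (X := (R + Bᴴ * Z * B)⁻¹ * (Bᴴ * Z * A)) ?_ (mul_nonsing_inv_cancel_left _ _ (hdet _ hM))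
  exact mul_nonsing_inv_mul_eq_zero_of_inv_mul_eq_inv_add_mul (hdet _ hM) (hdet _ hMP) h

/-- the fully observable LQS feedback gain
`L(σ) = (R + Bᵀ Z B + σ² Bᵀ Z B)⁻¹ Bᵀ Z A` genuinely depends on the
control-dependent noise scaling σ. -/
theorem feedback_gain_depends_on_control_noise
    (n m : ℕ)
    (R : Matrix (Fin m) (Fin m) ℝ) (Z : Matrix (Fin n) (Fin n) ℝ)
    (A : Matrix (Fin n) (Fin n) ℝ) (B : Matrix (Fin n) (Fin m) ℝ)
    (hR : R.PosDef) (hZ : Z.PosSemidef)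
    (hBZA : Bᵀ * Z * A ≠ 0) (hBZB : Bᵀ * Z * B ≠ 0) :
    ∃ σ₁ σ₂ : ℝ, 0 ≤ σ₁ ∧ 0 ≤ σ₂ ∧ σ₁ ≠ σ₂ ∧
      (R + Bᵀ * Z * B + σ₁ ^ 2 • (Bᵀ * Z * B))⁻¹ * (Bᵀ * Z * A) ≠
      (R + Bᵀ * Z * B + σ₂ ^ 2 • (Bᵀ * Z * B))⁻¹ * (Bᵀ * Z * A) :=
  feedback_gain_depends_on_control_noise_general n m R Z A B hR hZ hBZA
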